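/- arXiv:1111.6616 — 3 statements merged into one kernel-verified Lean document; each statement's English description precedes it below -/
import Mathlib

section
/- Let Γ be a countable oligomorphic relational structure over a finite relational signature. Then Γ has totally symmetric polymorphisms of all arities (i.e., for every n ≥ 1 an n-ary totally symmetric polymorphism) if and only if for every finite induced substructure S of Γ there is a homomorphism from the set structure P(S) to Γ. -/
/-!
A totally symmetric polymorphism `f` of arity `n ≥ |S| · (maximal arity)` gives the
homomorphism `P(S) → Γ`, `U ↦ f(u_1, …, u_n)` for any enumeration of `U`: a tuple
`(U_1, …, U_k)` of a relation of `P(S)` is witnessed by at most `n` tuples of the relation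
whose columns are exactly the `U_j`, and `f` maps these rows into the relation.

Conversely, a homomorphism `g` from the finite non-empty subsets of `Γ` yields the totally
symmetric polymorphisms `f(x_1, …, x_n) = g {x_1, …, x_n}`. Every finite part of that
countable structure lies in some `P(S)`, so `g` exists by compactness: oligomorphy lets
König's argument go through, since a descending chain of automorphism-invariant sets of
`k`-tuples is eventually constant.
-/

/-- A relational signature: a set of relation symbols, each with an arity. -/
structure Signature where
  symbols : Type
  arity : symbols → ℕ

/-- A relational structure over the signature `σ`. -/
structure RelStruct (σ : Signature) where
  D : Type
  rel : ∀ s : σ.symbols, Set (Fin (σ.arity s) → D)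

/-- `f` is a homomorphism from `A` to `B`. -/
def IsHom {σ : Signature} (A B : RelStruct σ) (f : A.D → B.D) : Prop :=
  ∀ (s : σ.symbols) (t : Fin (σ.arity s) → A.D), t ∈ A.rel s → (fun i => f (t i)) ∈ B.rel s

/-- The bijection `e` is an automorphism of `Γ`. -/
def IsAuto {σ : Signature} (Γ : RelStruct σ) (e : Γ.D ≃ Γ.D) : Prop :=
  ∀ (s : σ.symbols) (t : Fin (σ.arity s) → Γ.D), t ∈ Γ.rel s ↔ (fun i => e (t i)) ∈ Γ.rel s

/-- An `n`-ary operation is totally symmetric if its value only depends on the set of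
arguments. -/
def TotallySymmetric {D : Type} {n : ℕ} (f : (Fin n → D) → D) : Prop :=
  ∀ x y : Fin n → D, Set.range x = Set.range y → f x = f y

/-- The `n`-ary operation `f` preserves the `m`-ary relation `R`. -/
def Preserves {D : Type} {n m : ℕ} (f : (Fin n → D) → D) (R : Set (Fin m → D)) : Prop :=
  ∀ t : Fin n → Fin m → D, (∀ i, t i ∈ R) → (fun j => f (fun i => t i j)) ∈ R

/-- A polymorphism of `Γ` is an operation preserving all relations of `Γ`. -/
def IsPolymorphism {σ : Signature} (Γ : RelStruct σ) {n : ℕ} (f : (Fin n → Γ.D) → Γ.D) : Prop :=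
  ∀ s : σ.symbols, Preserves f (Γ.rel s)

/-- The substructure of `Γ` induced on the subset `S` of its domain. -/
def induced {σ : Signature} (Γ : RelStruct σ) (S : Set Γ.D) : RelStruct σ where
  D := ↥S
  rel := fun s => {t | (fun i => (t i : Γ.D)) ∈ Γ.rel s}

/-- The set structure `P(B)`: the domain consists of all non-empty subsets of the domain
of `B`, and a tuple `(U_1, …, U_k)` is in `R^{P(B)}` iff for every `i` and every
`u ∈ U_i` there is a tuple `t ∈ R^B` with `t i = u` and `t j ∈ U_j` for all `j`. -/
def setStruct {σ : Signature} (B : RelStruct σ) : RelStruct σ where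
  D := {U : Set B.D // U.Nonempty}
  rel := fun s =>
    {U | ∀ (i : Fin (σ.arity s)) (u : B.D), u ∈ (U i).1 →
      ∃ t ∈ B.rel s, t i = u ∧ ∀ j, t j ∈ (U j).1}

/-- `Γ` is oligomorphic: for each `n`, the automorphism group of `Γ` has finitely many
orbits in its componentwise action on `n`-tuples. -/
def Oligomorphic {σ : Signature} (Γ : RelStruct σ) : Prop :=
  ∀ n : ℕ, ∃ F : Set (Fin n → Γ.D), F.Finite ∧
    ∀ x : Fin n → Γ.D, ∃ y ∈ F, ∃ e : Γ.D ≃ Γ.D, IsAuto Γ e ∧ (fun i => e (y i)) = x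

theorem exists_surjective_fin_of_card_le {α : Type*} [Finite α] [Nonempty α] {n : ℕ}
    (h : Nat.card α ≤ n) : ∃ q : Fin n → α, Function.Surjective q := by
  have := Fintype.ofFinite α
  obtain ⟨e⟩ := Function.Embedding.nonempty_of_card_le (α := α) (β := Fin n)
    (by simpa [Nat.card_eq_fintype_card] using h)
  exact ⟨Function.invFun e, Function.invFun_surjective e.injective⟩

theorem exists_seq_forall_mem_of_extend {D : Type*} (E : ∀ k : ℕ, Set (Fin k → D))
    (h0 : (E 0).Nonempty) (hext : ∀ k, ∀ y ∈ E k, ∃ z ∈ E (k + 1), Fin.init z = y) :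
    ∃ x : ℕ → D, ∀ k, (fun i : Fin k => x i) ∈ E k := by
  choose step hstep hinit using hext
  let seq : ∀ k, E k := fun k =>
    Nat.rec ⟨h0.some, h0.some_mem⟩ (fun k y => ⟨step k y.1 y.2, hstep k y.1 y.2⟩) k
  have hseq : ∀ k, (seq k).1 = fun i : Fin k => (seq (i + 1)).1 (Fin.last i) := by
    intro k
    induction k with
    | zero => exact Subsingleton.elim _ _
    | succ k ih =>
      funext i
      induction i using Fin.lastCases with
      | last => rfl
      | cast i => exact (congrFun (hinit k _ _) i).trans (congrFun ih i)
  exact ⟨fun i => (seq (i + 1)).1 (Fin.last i), fun k => hseq k ▸ (seq k).2⟩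

section Oligomorphic

variable {σ : Signature} {Γ : RelStruct σ}

theorem IsAuto.symm {e : Γ.D ≃ Γ.D} (he : IsAuto Γ e) : IsAuto Γ e.symm := fun s t => by
  simpa using (he s fun i => e.symm (t i)).symm

/-- Oligomorphy bounds the length of a descending chain of automorphism-invariant sets of
`k`-tuples: each of the finitely many orbits leaves the chain at some finite stage. -/
theorem Oligomorphic.exists_subset_iInter_of_antitone (holig : Oligomorphic Γ) {k : ℕ}
    (B : ℕ → Set (Fin k → Γ.D)) (hB : Antitone B)
    (hauto : ∀ m e, IsAuto Γ e → ∀ y ∈ B m, (fun i => e (y i)) ∈ B m) :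
    ∃ M, B M ⊆ ⋂ m, B m := by
  obtain ⟨F, hF, hrep⟩ := holig k
  have hleave : ∀ y, ∃ M, y ∈ B M → ∀ m, y ∈ B m := fun y => by
    by_cases h : ∀ m, y ∈ B m
    · exact ⟨0, fun _ => h⟩
    · obtain ⟨M, hM⟩ := not_forall.1 h
      exact ⟨M, fun hy => absurd hy hM⟩
  choose M hM using hleave
  obtain ⟨N, hN⟩ := (hF.image M).bddAbove
  refine ⟨N, fun x hx => Set.mem_iInter.2 fun m => ?_⟩
  obtain ⟨y, hyF, e, he, rfl⟩ := hrep x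
  have hy : y ∈ B N := by simpa using hauto N _ he.symm _ hx
  exact hauto m e he y (hM y (hB (hN (Set.mem_image_of_mem M hyF)) hy) m)

/-- König's lemma for oligomorphic structures. -/
theorem Oligomorphic.exists_forall_eqOn_of_antitone (holig : Oligomorphic Γ)
    (P : ℕ → Set (ℕ → Γ.D)) (hP : Antitone P) (hne : ∀ m, (P m).Nonempty)
    (hauto : ∀ m e, IsAuto Γ e → ∀ x ∈ P m, (fun i => e (x i)) ∈ P m) :
    ∃ x : ℕ → Γ.D, ∀ m, ∃ x' ∈ P m, Set.EqOn x' x (Set.Iio m) := by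
  let A : ∀ k, ℕ → Set (Fin k → Γ.D) := fun k m => (fun x (i : Fin k) => x i) '' P m
  have hA : ∀ k, ∃ M, A k M ⊆ ⋂ m, A k m := fun k => by
    refine holig.exists_subset_iInter_of_antitone (A k) (fun m m' hm => Set.image_mono (hP hm)) ?_
    rintro m e he _ ⟨x, hx, rfl⟩
    exact ⟨_, hauto m e he x hx, rfl⟩
  choose M hM using hA
  obtain ⟨x, hx⟩ := exists_seq_forall_mem_of_extend (fun k => ⋂ m, A k m)
    ((Set.Nonempty.image _ (hne (M 0))).mono (hM 0)) (fun k y hy => by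
      obtain ⟨x, hx, rfl⟩ := Set.mem_iInter.1 hy (M (k + 1))
      exact ⟨_, hM (k + 1) ⟨x, hx, rfl⟩, rfl⟩)
  refine ⟨x, fun m => ?_⟩
  obtain ⟨x', hx', hxx'⟩ := Set.mem_iInter.1 (hx m) m
  exact ⟨x', hx', fun i hi => congrFun hxx' ⟨i, hi⟩⟩

end Oligomorphic

theorem Oligomorphic.exists_isHom_of_forall_finite {σ : Signature} {Γ : RelStruct σ}
    (holig : Oligomorphic Γ) (A : RelStruct σ) [Countable A.D]
    (hfin : ∀ F : Set A.D, F.Finite → ∃ g : F → Γ.D, IsHom (induced A F) Γ g) :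
    ∃ g : A.D → Γ.D, IsHom A Γ g := by
  classical
  rcases isEmpty_or_nonempty A.D with hA | _
  · obtain ⟨g, hg⟩ := hfin ∅ Set.finite_empty
    refine ⟨isEmptyElim, fun s t ht => ?_⟩
    have ht' : (fun i => isEmptyElim (t i) : Fin _ → (∅ : Set A.D)) ∈ (induced A ∅).rel s := by
      show (fun i => ((isEmptyElim (t i) : (∅ : Set A.D)) : A.D)) ∈ A.rel s
      convert ht using 1
    convert hg s _ ht' using 1
    exact funext fun i => isEmptyElim (t i)
  obtain ⟨enum, henum⟩ := exists_surjective_nat A.D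
  obtain ⟨d⟩ : Nonempty Γ.D := by
    obtain ⟨g, -⟩ := hfin {enum 0} (Set.finite_singleton _)
    exact ⟨g ⟨enum 0, rfl⟩⟩
  let P : ℕ → Set (ℕ → Γ.D) := fun m => {x | ∀ s (c : Fin (σ.arity s) → ℕ), (∀ j, c j < m) →
    (fun j => enum (c j)) ∈ A.rel s → (fun j => x (c j)) ∈ Γ.rel s}
  have hP : Antitone P := fun m m' hm x hx s c hc => hx s c fun j => (hc j).trans_le hm
  have hne : ∀ m, (P m).Nonempty := fun m => by
    obtain ⟨g, hg⟩ := hfin _ ((Set.finite_Iio m).image enum)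
    refine ⟨fun i => if hi : i < m then g ⟨enum i, Set.mem_image_of_mem enum hi⟩ else d,
      fun s c hc hrel => ?_⟩
    simpa [dif_pos (hc _)] using hg s (fun j => ⟨enum (c j), Set.mem_image_of_mem enum (hc j)⟩) hrel
  have hauto : ∀ m e, IsAuto Γ e → ∀ x ∈ P m, (fun i => e (x i)) ∈ P m :=
    fun m e he x hx s c hc hrel => (he s _).1 (hx s c hc hrel)
  obtain ⟨x, hx⟩ := holig.exists_forall_eqOn_of_antitone P hP hne hauto
  refine ⟨fun b => x (Function.surjInv henum b), fun s t ht => ?_⟩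
  let c := fun j => Function.surjInv henum (t j)
  obtain ⟨x', hx', hxx'⟩ := hx (Finset.univ.sup c + 1)
  have hc : ∀ j, c j < Finset.univ.sup c + 1 :=
    fun j => Nat.lt_succ_of_le (Finset.le_sup (Finset.mem_univ j))
  have := hx' s c hc (by simpa [c, Function.surjInv_eq henum] using ht)
  simpa [hxx' (hc _)] using this

theorem exists_rows_of_forall_exists_mem {α : Type*} {k : ℕ} {R : Set (Fin k → α)}
    {U : Fin k → Set α} (hU : ∀ j, ∀ u ∈ U j, ∃ t ∈ R, t j = u ∧ ∀ j', t j' ∈ U j') :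
    ∃ r : {p : Fin k × α // p.2 ∈ U p.1} → Fin k → α,
      (∀ p, r p ∈ R) ∧ ∀ j, Set.range (fun p => r p j) = U j := by
  choose r hrR hrj hrU using fun p : {p : Fin k × α // p.2 ∈ U p.1} => hU p.1.1 p.1.2 p.2
  refine ⟨r, hrR, fun j => Set.Subset.antisymm ?_ fun u hu => ⟨⟨(j, u), hu⟩, hrj _⟩⟩
  rintro _ ⟨p, rfl⟩
  exact hrU p j

theorem exists_fin_range_eq {α : Type*} {U : Set α} [Finite U] (hU : U.Nonempty) {n : ℕ}
    (h : Nat.card U ≤ n) : ∃ v : Fin n → α, Set.range v = U := by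
  have := hU.to_subtype
  obtain ⟨q, hq⟩ := exists_surjective_fin_of_card_le h
  exact ⟨fun i => q i, by rw [Set.range_comp' Subtype.val q, hq.range_eq, Set.image_univ,
    Subtype.range_coe]⟩

theorem TotallySymmetric.exists_isHom_setStruct {σ : Signature} {Γ : RelStruct σ} {n : ℕ}
    {f : (Fin n → Γ.D) → Γ.D} (hsym : TotallySymmetric f) (hf : IsPolymorphism Γ f)
    (har : ∀ s : σ.symbols, 0 < σ.arity s) (S : Set Γ.D) [Finite S] (hSn : Nat.card S ≤ n)
    (hn : ∀ s, σ.arity s * Nat.card S ≤ n) :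
    ∃ h : (setStruct (induced Γ S)).D → Γ.D, IsHom (setStruct (induced Γ S)) Γ h := by
  have : Finite (induced Γ S).D := ‹Finite S›
  have henum : ∀ U : (setStruct (induced Γ S)).D, ∃ v : Fin n → Γ.D,
      Set.range v = Subtype.val '' U.1 := fun U => by
    obtain ⟨v, hv⟩ := exists_fin_range_eq (U := U.1) U.2
      ((Finite.card_subtype_le (α := (induced Γ S).D) _).trans hSn)
    exact ⟨fun i => (v i).1, (Set.range_comp Subtype.val v).trans (congrArg (Subtype.val '' ·) hv)⟩
  choose v hv using henum
  refine ⟨fun U => f (v U), fun s U hU => ?_⟩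
  obtain ⟨r, hrR, hrU⟩ := exists_rows_of_forall_exists_mem hU
  have : Nonempty {p : Fin (σ.arity s) × (induced Γ S).D // p.2 ∈ (U p.1).1} :=
    have ⟨u, hu⟩ := (U ⟨0, har s⟩).2
    ⟨⟨(⟨0, har s⟩, u), hu⟩⟩
  have hcard : Nat.card (Fin (σ.arity s) × (induced Γ S).D) ≤ n := by
    rw [Nat.card_prod, Nat.card_fin]
    exact hn s
  obtain ⟨q, hq⟩ := exists_surjective_fin_of_card_le
    ((Finite.card_subtype_le fun p => p.2 ∈ (U p.1).1).trans hcard)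
  convert hf s (fun i j => (r (q i) j).1) fun i => hrR (q i) using 2 with j
  refine hsym _ _ ?_
  have hcol : Set.range (fun i => r (q i) j) = (U j).1 :=
    (hq.range_comp (fun p => r p j)).trans (hrU j)
  exact (hv _).trans ((congrArg (Subtype.val '' ·) hcol).symm.trans (Set.range_comp _ _).symm)

abbrev finSetStruct {σ : Signature} (B : RelStruct σ) : RelStruct σ :=
  induced (setStruct B) {U | U.1.Finite}

instance {σ : Signature} (B : RelStruct σ) [Countable B.D] : Countable (finSetStruct B).D :=
  have : Countable {U : Set B.D | U.Finite} := Set.Countable.ofPred_finite.to_subtype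
  Function.Injective.countable
    (f := fun U : (finSetStruct B).D => (⟨U.1.1, U.2⟩ : {U : Set B.D | U.Finite}))
    fun _ _ h => Subtype.ext (Subtype.ext (Subtype.mk.inj h))

/-- A finite set `F` of finite subsets of `Γ` lives in `P(S)` for `S = ⋃ F`, by pulling each
set back along the inclusion `S → Γ`. -/
theorem exists_isHom_induced_finSetStruct {σ : Signature} {Γ : RelStruct σ}
    (hhom : ∀ S : Set Γ.D, S.Finite →
      ∃ h : (setStruct (induced Γ S)).D → Γ.D, IsHom (setStruct (induced Γ S)) Γ h)
    (F : Set (finSetStruct Γ).D) (hF : F.Finite) :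
    ∃ g : F → Γ.D, IsHom (induced (finSetStruct Γ) F) Γ g := by
  let S : Set Γ.D := ⋃ U ∈ F, U.1.1
  obtain ⟨h, hh⟩ := hhom S (hF.biUnion fun U _ => U.2)
  have hsub : ∀ U : F, U.1.1.1 ⊆ S := fun U => Set.subset_biUnion_of_mem (u := fun U => U.1.1) U.2
  let lift : F → (setStruct (induced Γ S)).D := fun U =>
    ⟨Subtype.val ⁻¹' U.1.1.1, have ⟨u, hu⟩ := U.1.1.2; ⟨⟨u, hsub U hu⟩, hu⟩⟩
  refine ⟨fun U => h (lift U), fun s U hU => hh s _ fun j u hu => ?_⟩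
  obtain ⟨t, ht, htj, htU⟩ := hU j u.1 hu
  exact ⟨fun i => ⟨t i, hsub (U i) (htU i)⟩, ht, Subtype.ext htj, htU⟩

theorem exists_totallySymmetric_of_isHom_finSetStruct {σ : Signature} {Γ : RelStruct σ}
    {g : (finSetStruct Γ).D → Γ.D} (hg : IsHom (finSetStruct Γ) Γ g) {n : ℕ} (hn : 1 ≤ n) :
    ∃ f : (Fin n → Γ.D) → Γ.D, IsPolymorphism Γ f ∧ TotallySymmetric f := by
  let setOf : (Fin n → Γ.D) → (finSetStruct Γ).D := fun v =>
    ⟨⟨Set.range v, Set.range_nonempty_iff_nonempty.2 ⟨⟨0, hn⟩⟩⟩, Set.finite_range v⟩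
  refine ⟨fun v => g (setOf v), fun s t ht => hg s _ ?_, fun x y hxy => ?_⟩
  · rintro j _ ⟨i, rfl⟩
    exact ⟨t i, ht i, rfl, fun j' => Set.mem_range_self i⟩
  · exact congrArg g (Subtype.ext (Subtype.ext hxy))

/-- A countable oligomorphic structure over a finite relational signature has totally
symmetric polymorphisms of all arities iff the set structure `P(S)` of every finite
induced substructure `S` maps homomorphically to `Γ`. -/
theorem stmt2 {σ : Signature} [Finite σ.symbols] (har : ∀ s : σ.symbols, 0 < σ.arity s)
    (Γ : RelStruct σ) [Countable Γ.D] (holig : Oligomorphic Γ) :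
    (∀ n : ℕ, 1 ≤ n → ∃ f : (Fin n → Γ.D) → Γ.D,
      IsPolymorphism Γ f ∧ TotallySymmetric f) ↔
    (∀ S : Set Γ.D, S.Finite →
      ∃ h : (setStruct (induced Γ S)).D → Γ.D, IsHom (setStruct (induced Γ S)) Γ h) := by
  constructor
  · intro hpoly S hS
    have := hS.to_subtype
    obtain ⟨N, hN⟩ := (Set.finite_range σ.arity).bddAbove
    obtain ⟨f, hf, hsym⟩ := hpoly ((N + 1) * Nat.card S + 1) (Nat.le_add_left 1 _)
    refine hsym.exists_isHom_setStruct hf har S (by nlinarith) fun s => ?_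
    have := hN (Set.mem_range_self s)
    nlinarith
  · intro hhom n hn
    obtain ⟨g, hg⟩ := holig.exists_isHom_of_forall_finite (finSetStruct Γ)
      (exists_isHom_induced_finSetStruct hhom)
    exact exists_totallySymmetric_of_isHom_finSetStruct hg hn
end

section
/- Let Γ be a countable relational structure of sub-exponential growth with automorphism group G and orbits U_1, …, U_k on the domain D, and for 1 ≤ i ≤ k let G_i := { α|_{U_i} : α ∈ G } be the transitive constituent of G on U_i. Assume that for each i there is a bijection b_i : U_i → ℚ such that G_i = { b_i^{-1} ∘ β ∘ b_i : β ∈ Aut(ℚ;<) }, where Aut(ℚ;<) is the group of order-preserving permutations of the rationals. Then a permutation α of D belongs to G if and only if α|_{U_i} ∈ G_i for each 1 ≤ i ≤ k. -/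
/-- The set of orbits of the action of `Aut(Γ)` on `n`-element subsets of the domain:
each orbit is the collection of all images of a fixed `n`-element set under
automorphisms. -/
def subsetOrbits {σ : Signature} (Γ : RelStruct σ) (n : ℕ) : Set (Set (Set Γ.D)) :=
  {O | ∃ S : Set Γ.D, S.Finite ∧ S.ncard = n ∧
    O = {T | ∃ e : Γ.D ≃ Γ.D, IsAuto Γ e ∧ e '' S = T}}

/-- `Γ` has exponential growth: there is a real `c > 1` such that for all sufficiently
large `n`, the number of orbits of `n`-subsets of `Γ` is at least `c ^ n`. -/
def ExpGrowth {σ : Signature} (Γ : RelStruct σ) : Prop :=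
  ∃ c : ℝ, 1 < c ∧ ∃ N : ℕ, ∀ n ≥ N,
    (⌈c ^ n⌉₊ : Cardinal) ≤ Cardinal.mk ↥(subsetOrbits Γ n)

/-- The orbit of the element `a` under `Aut(Γ)`. -/
def orbitOf {σ : Signature} (Γ : RelStruct σ) (a : Γ.D) : Set Γ.D :=
  {x | ∃ e : Γ.D ≃ Γ.D, IsAuto Γ e ∧ e a = x}

/-- `U` is an orbit of the action of `Aut(Γ)` on the domain. -/
def IsOrbit {σ : Signature} (Γ : RelStruct σ) (U : Set Γ.D) : Prop :=
  ∃ a : Γ.D, U = orbitOf Γ a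

/-!
Since relations have finite arity, `α` is an automorphism as soon as it agrees with one on every
finite set `F`. Treating the orbits one at a time, this reduces to finding, for an automorphism `e`
and an orbit `U`, an automorphism that agrees with `e` on `F ∩ U` and fixes `F \ U`.

If there were none, exponentially many orbits of `m`-sets would arise. In the `ℚ`-coordinates of
`U`, lay out `n ≈ m / K` translated blocks, the `r`-th being a copy either of the coordinates of
`F ∩ U` or of their image under `e`, and add the images of `F \ U` under the automorphisms realising
these translations. An automorphism carrying one such set onto another acts order-preservingly on
every orbit, so it fixes the part outside `U` and maps the blocks onto each other in order. If the
two sets differ at block `r`, conjugating by the `r`-th translation gives the forbidden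
automorphism; hence the `2 ^ n` choices of blocks lie in distinct orbits.
-/

open Set Function Equiv

section Order

variable {ι α : Type*} [LinearOrder ι] [WellFoundedLT ι] [LinearOrder α]

theorem StrictMono.comp_eq_of_image_range_eq {β : α → α} {f f' : ι → α} (hβ : StrictMono β)
    (hf : StrictMono f) (hf' : StrictMono f') (h : β '' range f = range f') : β ∘ f = f' :=
  ((hβ.comp hf).range_inj hf').mp (by rw [range_comp, h])

theorem StrictMono.apply_eq_self_of_image_eq {β : α → α} (hβ : StrictMono β) {X : Set α}
    (hX : X.Finite) (h : β '' X = X) : ∀ x ∈ X, β x = x := by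
  have hrange : range (hX.toFinset.orderEmbOfFin rfl) = X := by simp
  have hfix := hβ.comp_eq_of_image_range_eq (hX.toFinset.orderEmbOfFin rfl).strictMono
    (hX.toFinset.orderEmbOfFin rfl).strictMono (by rw [hrange, h])
  rintro x hx
  obtain ⟨j, rfl⟩ := hrange.symm ▸ hx
  exact congrFun hfix j

end Order

theorem image_eq_of_image_image_eq {α β : Type*} {p : α → β} (hp : Injective p) {g : β → β}
    {f : α → α} (h : ∀ t, g (p t) = p (f t)) {X X' : Set α} (hX : g '' (p '' X) = p '' X') :
    f '' X = X' := by
  apply image_injective.mpr hp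
  rw [← hX, image_image, image_image]
  simp [h]

theorem injective_val_symm {α β : Type*} {s : Set α} (b : s ≃ β) :
    Injective fun t => (b.symm t : α) :=
  Subtype.val_injective.comp b.symm.injective

theorem range_val_symm {α β : Type*} {s : Set α} (b : s ≃ β) :
    range (fun t => (b.symm t : α)) = s := by
  rw [range_comp' Subtype.val b.symm, b.symm.range_eq_univ]
  simp

variable {σ : Signature} {Γ : RelStruct σ}

def autGroup (Γ : RelStruct σ) : Subgroup (Perm Γ.D) where
  carrier := {e | IsAuto Γ e}
  mul_mem' {e f} he hf s t := (hf s t).trans (he s _)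
  one_mem' _ _ := Iff.rfl
  inv_mem' {e} he s t := by simpa using (he s fun i => e.symm (t i)).symm

theorem isAuto_of_forall_finset_exists {α : Perm Γ.D}
    (h : ∀ F : Finset Γ.D, ∃ g ∈ autGroup Γ, ∀ x ∈ F, g x = α x) : IsAuto Γ α := by
  classical
  intro s t
  obtain ⟨g, hg, hgα⟩ := h (Finset.univ.image t)
  have : (fun i => α (t i)) = fun i => g (t i) :=
    funext fun i => (hgα _ (Finset.mem_image_of_mem t (Finset.mem_univ i))).symm
  rw [this]
  exact hg s t

theorem exists_aut_image_eq_of_orbit_eq {S S' : Set Γ.D}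
    (h : {T | ∃ e : Perm Γ.D, IsAuto Γ e ∧ e '' S = T} =
      {T | ∃ e : Perm Γ.D, IsAuto Γ e ∧ e '' S' = T}) :
    ∃ g ∈ autGroup Γ, g '' S = S' := by
  have hS' : S' ∈ {T | ∃ e : Perm Γ.D, IsAuto Γ e ∧ e '' S' = T} :=
    ⟨1, one_mem (autGroup Γ), image_id S'⟩
  rw [← h] at hS'
  exact hS'

namespace IsOrbit

variable {U V : Set Γ.D}

theorem apply_mem_iff (hU : IsOrbit Γ U) {g : Perm Γ.D} (hg : g ∈ autGroup Γ) {x : Γ.D} :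
    g x ∈ U ↔ x ∈ U := by
  obtain ⟨a, rfl⟩ := hU
  constructor
  · rintro ⟨f, hf, hfa⟩
    exact ⟨g⁻¹ * f, mul_mem (inv_mem hg) hf, by simp [hfa]⟩
  · rintro ⟨f, hf, rfl⟩
    exact ⟨g * f, mul_mem hg hf, rfl⟩

theorem image_inter (hU : IsOrbit Γ U) {g : Perm Γ.D} (hg : g ∈ autGroup Γ) (S : Set Γ.D) :
    g '' (S ∩ U) = g '' S ∩ U := by
  rw [Set.image_inter g.injective]
  congr 1
  ext x
  rw [g.image_eq_preimage_symm, mem_preimage, ← hU.apply_mem_iff hg]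
  simp

theorem eq_of_mem (hU : IsOrbit Γ U) (hV : IsOrbit Γ V) {x : Γ.D} (hxU : x ∈ U) (hxV : x ∈ V) :
    U = V := by
  suffices h : ∀ {U V : Set Γ.D}, IsOrbit Γ U → IsOrbit Γ V → x ∈ U → x ∈ V → U ⊆ V from
    (h hU hV hxU hxV).antisymm (h hV hU hxV hxU)
  intro U V hU hV hxU hxV y hyU
  obtain ⟨a, rfl⟩ := hU
  obtain ⟨f, hf, rfl⟩ := hxU
  obtain ⟨g, hg, rfl⟩ := hyU
  rw [← hV.apply_mem_iff (inv_mem hf)] at hxV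
  exact (hV.apply_mem_iff (show g ∈ autGroup Γ from hg)).mpr (by simpa using hxV)

end IsOrbit

def IsOrderConstituent (Γ : RelStruct σ) (U : Set Γ.D) (b : U ≃ ℚ) : Prop :=
  ∀ g : U ≃ U, ((∃ e : Γ.D ≃ Γ.D, IsAuto Γ e ∧ ∀ x : U, (g x : Γ.D) = e (x : Γ.D)) ↔
    ∃ β : ℚ ≃ ℚ, StrictMono ⇑β ∧ ∀ x : U, g x = b.symm (β (b x)))

namespace IsOrderConstituent

variable {U : Set Γ.D} {b : U ≃ ℚ}

theorem exists_strictMono (hb : IsOrderConstituent Γ U b) (hU : IsOrbit Γ U) {g : Perm Γ.D}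
    (hg : g ∈ autGroup Γ) : ∃ β : ℚ → ℚ, StrictMono β ∧ ∀ t, g (b.symm t) = b.symm (β t) := by
  obtain ⟨β, hβ, h⟩ :=
    (hb (g.subtypeEquiv fun _ => (hU.apply_mem_iff hg).symm)).mp ⟨g, hg, fun _ => rfl⟩
  exact ⟨β, hβ, fun t => by simpa using congrArg Subtype.val (h (b.symm t))⟩

theorem exists_aut (hb : IsOrderConstituent Γ U b) {β : ℚ ≃ ℚ} (hβ : StrictMono β) :
    ∃ g ∈ autGroup Γ, ∀ t, g (b.symm t) = b.symm (β t) := by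
  obtain ⟨g, hg, h⟩ := (hb (b.trans (β.trans b.symm))).mpr ⟨β, hβ, fun _ => rfl⟩
  exact ⟨g, hg, fun t => by simpa using (h (b.symm t)).symm⟩

theorem apply_eq_self_of_image_eq (hb : IsOrderConstituent Γ U b) (hU : IsOrbit Γ U)
    {g : Perm Γ.D} (hg : g ∈ autGroup Γ) {W : Set Γ.D} (hW : W.Finite) (hWU : W ⊆ U)
    (h : g '' W = W) : ∀ x ∈ W, g x = x := by
  obtain ⟨β, hβ, hgβ⟩ := hb.exists_strictMono hU hg
  set X := (fun t => (b.symm t : Γ.D)) ⁻¹' W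
  have hWX : (fun t => (b.symm t : Γ.D)) '' X = W :=
    image_preimage_eq_of_subset ((range_val_symm b).symm ▸ hWU)
  have hβX := hβ.apply_eq_self_of_image_eq (hW.preimage (injective_val_symm b).injOn)
    (image_eq_of_image_image_eq (injective_val_symm b) hgβ (by rw [hWX, h]))
  rw [← hWX]
  rintro _ ⟨t, ht, rfl⟩
  rw [hgβ, hβX t ht]

end IsOrderConstituent

section Rigidity

variable {U : Set Γ.D} {g : Perm Γ.D}

theorem apply_eq_self_of_image_union_eq (hU : IsOrbit Γ U)
    (hrat : ∀ x, ∃ V, IsOrbit Γ V ∧ x ∈ V ∧ ∃ c, IsOrderConstituent Γ V c)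
    (hg : g ∈ autGroup Γ) {Z Y Y' : Set Γ.D} (hZ : Z.Finite) (hZU : Disjoint Z U) (hY : Y ⊆ U)
    (hY' : Y' ⊆ U) (h : g '' (Z ∪ Y) = Z ∪ Y') : ∀ z ∈ Z, g z = z := by
  intro z hz
  obtain ⟨V, hV, hzV, c, hc⟩ := hrat z
  have hVY : ∀ {Y}, Y ⊆ U → (Z ∪ Y) ∩ V = Z ∩ V := by
    intro Y hY
    rw [union_inter_distrib_right, union_eq_left]
    rintro y ⟨hyY, hyV⟩
    exact (disjoint_left.mp hZU hz (by rwa [hU.eq_of_mem hV (hY hyY) hyV])).elim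
  have hZV : g '' (Z ∩ V) = Z ∩ V := by
    rw [← hVY hY, hV.image_inter hg, h, hVY hY', hVY hY]
  exact hc.apply_eq_self_of_image_eq hV hg (hZ.inter_of_left V) inter_subset_right hZV z ⟨hz, hzV⟩

theorem apply_eq_of_image_union_eq {b : U ≃ ℚ} (hU : IsOrbit Γ U) (hb : IsOrderConstituent Γ U b)
    (hg : g ∈ autGroup Γ) {Z : Set Γ.D} (hZU : Disjoint Z U) {ι : Type*} [LinearOrder ι]
    [WellFoundedLT ι] {f f' : ι → ℚ} (hf : StrictMono f) (hf' : StrictMono f')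
    (h : g '' (Z ∪ range fun i => (b.symm (f i) : Γ.D)) =
      Z ∪ range fun i => (b.symm (f' i) : Γ.D)) :
    ∀ i, g (b.symm (f i)) = b.symm (f' i) := by
  obtain ⟨β, hβ, hgβ⟩ := hb.exists_strictMono hU hg
  have hUY : ∀ f : ι → ℚ,
      (Z ∪ range fun i => (b.symm (f i) : Γ.D)) ∩ U = (fun t => (b.symm t : Γ.D)) '' range f := by
    intro f
    rw [union_inter_distrib_right, hZU.inter_eq, empty_union, inter_eq_left.mpr, ← range_comp]
    · rfl
    · rintro _ ⟨i, rfl⟩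
      exact (b.symm (f i)).2
  have hβf := hβ.comp_eq_of_image_range_eq hf hf'
    (image_eq_of_image_image_eq (injective_val_symm b) hgβ
      (by rw [← hUY, ← hUY, hU.image_inter hg, h]))
  intro i
  rw [hgβ, ← hβf]
  rfl

end Rigidity

section BlockPattern

variable {n q p : ℕ} {a a' : Fin q → ℚ}

/-- Block `r < n` is the copy of `a` (if `w r` is false) or of `a'` (if `w r` is true) translated
by `r * M`; the `p` points above all blocks only pad the pattern to a prescribed size. -/
def blockPattern (a a' : Fin q → ℚ) (M : ℚ) (w : Fin n → Bool) : (Fin n ×ₗ Fin q) ⊕ₗ Fin p → ℚ :=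
  fun i => Sum.elim
    (fun x : Fin n ×ₗ Fin q => (if w (ofLex x).1 then a' else a) (ofLex x).2 + (ofLex x).1 * M)
    (fun t : Fin p => n * M + t) (ofLex i)

theorem blockPattern_inl (M : ℚ) (w : Fin n → Bool) (r : Fin n) (j : Fin q) :
    blockPattern (p := p) a a' M w (toLex (.inl (toLex (r, j)))) =
      (if w r then a' else a) j + r * M :=
  rfl

theorem strictMono_blockPattern (ha : StrictMono a) (ha' : StrictMono a') {L : ℚ}
    (hL : ∀ j, |a j| < L ∧ |a' j| < L) (w : Fin n → Bool) :
    StrictMono (blockPattern (p := p) a a' (2 * L) w) := by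
  have hbound : ∀ r j, |(if w r then a' else a) j| < L := fun r j => by
    split
    exacts [(hL j).2, (hL j).1]
  rintro (⟨r, j⟩ | t) (⟨r', j'⟩ | t') h
  · rcases Prod.Lex.toLex_lt_toLex.mp (Sum.Lex.inl_lt_inl_iff.mp h) with hr | ⟨rfl, hj⟩
    · show (if w r then a' else a) j + r * (2 * L) < (if w r' then a' else a) j' + r' * (2 * L)
      have hrr' : (r : ℚ) + 1 ≤ r' := by exact_mod_cast hr
      have := abs_lt.mp (hbound r j)
      have := abs_lt.mp (hbound r' j')
      nlinarith
    · show (if w r then a' else a) j + r * (2 * L) < (if w r then a' else a) j' + r * (2 * L)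
      gcongr
      split
      exacts [ha' hj, ha hj]
  · show (if w r then a' else a) j + r * (2 * L) < n * (2 * L) + t'
    have hrn : (r : ℚ) + 1 ≤ n := by exact_mod_cast r.isLt
    have := abs_lt.mp (hbound r j)
    have : (0 : ℚ) ≤ t' := by positivity
    nlinarith
  · exact absurd h Sum.Lex.not_inr_lt_inl
  · show n * (2 * L) + t < n * (2 * L) + t'
    gcongr
    exact_mod_cast Sum.Lex.inr_lt_inr_iff.mp h

end BlockPattern

theorem expGrowth_of_injective {K : ℕ} (hK : 0 < K)
    (h : ∀ m ≥ K, ∃ f : (Fin (m / K) → Bool) → subsetOrbits Γ m, Injective f) :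
    ExpGrowth Γ := by
  set c : ℝ := 2 ^ ((2 * K : ℕ) : ℝ)⁻¹
  have hc : c ^ (2 * K) = 2 := Real.rpow_inv_natCast_pow (by norm_num) (by omega)
  have hc1 : 1 < c := Real.one_lt_rpow (by norm_num) (by positivity)
  refine ⟨c, hc1, K, fun m hm => ?_⟩
  obtain ⟨f, hf⟩ := h m hm
  set n := m / K
  have hm2 : m ≤ 2 * K * n := by
    have h1 : m < K * (n + 1) := Nat.lt_mul_div_succ m hK
    have h2 : 1 ≤ n := (Nat.one_le_div_iff hK).mpr hm
    nlinarith
  have hceil : ⌈c ^ m⌉₊ ≤ 2 ^ n := Nat.ceil_le.mpr <| by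
    calc c ^ m ≤ c ^ (2 * K * n) := pow_le_pow_right₀ hc1.le hm2
      _ = 2 ^ n := by rw [pow_mul, hc]
      _ = ((2 ^ n : ℕ) : ℝ) := by norm_cast
  calc (⌈c ^ m⌉₊ : Cardinal) ≤ ((2 ^ n : ℕ) : Cardinal) := by exact_mod_cast hceil
    _ = Cardinal.mk (Fin n → Bool) := by simp
    _ ≤ Cardinal.mk (subsetOrbits Γ m) := Cardinal.mk_le_of_injective hf

section Growth

variable {U : Set Γ.D} {b : U ≃ ℚ}

theorem exists_aut_extension_of_image_eq (hU : IsOrbit Γ U) (hb : IsOrderConstituent Γ U b)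
    (hrat : ∀ x, ∃ V, IsOrbit Γ V ∧ x ∈ V ∧ ∃ c, IsOrderConstituent Γ V c)
    {q n p : ℕ} {a a' : Fin q → ℚ} (ha : StrictMono a) (ha' : StrictMono a') {L : ℚ}
    (hL : ∀ j, |a j| < L ∧ |a' j| < L) {C Z : Set Γ.D} (hZ : Z.Finite) (hZU : Disjoint Z U)
    {w w' : Fin n → Bool} {g : Perm Γ.D} (hg : g ∈ autGroup Γ)
    (h : g '' (Z ∪ range fun i => (b.symm (blockPattern (p := p) a a' (2 * L) w i) : Γ.D)) =
      Z ∪ range fun i => (b.symm (blockPattern (p := p) a a' (2 * L) w' i) : Γ.D))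
    {r : Fin n} (hr : w r = false) (hr' : w' r = true) {φ : Perm Γ.D} (hφ : φ ∈ autGroup Γ)
    (hφb : ∀ t, φ (b.symm t) = b.symm (t + r * (2 * L))) (hφC : φ '' C ⊆ Z) :
    ∃ g' ∈ autGroup Γ, (∀ j, g' (b.symm (a j)) = b.symm (a' j)) ∧ ∀ x ∈ C, g' x = x := by
  have hfix := apply_eq_self_of_image_union_eq hU hrat hg hZ hZU
    (range_subset_iff.mpr fun _ => Subtype.prop _) (range_subset_iff.mpr fun _ => Subtype.prop _) h
  have hpat := apply_eq_of_image_union_eq hU hb hg hZU (strictMono_blockPattern ha ha' hL w)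
    (strictMono_blockPattern ha ha' hL w') h
  refine ⟨φ⁻¹ * g * φ, mul_mem (mul_mem (inv_mem hφ) hg) hφ, fun j => ?_, fun x hx => ?_⟩
  · have := hpat (toLex (.inl (toLex (r, j))))
    rw [blockPattern_inl, blockPattern_inl, hr, hr'] at this
    rw [Perm.mul_apply, Perm.mul_apply, hφb, Perm.inv_eq_iff_eq, hφb]
    exact this
  · rw [Perm.mul_apply, Perm.mul_apply, hfix _ (hφC (mem_image_of_mem φ hx)),
      Perm.inv_eq_iff_eq]

theorem ncard_union_range_blockPattern {n q p : ℕ} {a a' : Fin q → ℚ} (ha : StrictMono a)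
    (ha' : StrictMono a') {L : ℚ} (hL : ∀ j, |a j| < L ∧ |a' j| < L) {Z : Finset Γ.D}
    (hZU : Disjoint (Z : Set Γ.D) U) (w : Fin n → Bool) :
    (↑Z ∪ range fun i => (b.symm (blockPattern (p := p) a a' (2 * L) w i) : Γ.D)).ncard =
      Z.card + (n * q + p) := by
  rw [ncard_union_eq, ncard_coe_finset, ncard_range_of_injective (f := fun i =>
    (b.symm (blockPattern (p := p) a a' (2 * L) w i) : Γ.D))
    ((injective_val_symm b).comp (strictMono_blockPattern ha ha' hL w).injective)]
  · simp
  · exact hZU.mono_right (range_subset_iff.mpr fun _ => Subtype.prop _)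

theorem expGrowth_of_not_exists_aut_extension (hU : IsOrbit Γ U) (hb : IsOrderConstituent Γ U b)
    (hrat : ∀ x, ∃ V, IsOrbit Γ V ∧ x ∈ V ∧ ∃ c, IsOrderConstituent Γ V c)
    {q : ℕ} {a a' : Fin q → ℚ} (ha : StrictMono a) (ha' : StrictMono a') (C : Finset Γ.D)
    (hCU : Disjoint (C : Set Γ.D) U)
    (hnot : ¬ ∃ g ∈ autGroup Γ, (∀ j, g (b.symm (a j)) = b.symm (a' j)) ∧ ∀ x ∈ C, g x = x) :
    ExpGrowth Γ := by
  classical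
  set L : ℚ := ∑ j, (|a j| + |a' j|) + 1
  have hL : ∀ j, |a j| < L ∧ |a' j| < L := fun j => by
    have := Finset.single_le_sum (f := fun j => |a j| + |a' j|) (fun j _ => by positivity)
      (Finset.mem_univ j)
    constructor <;> linarith [abs_nonneg (a j), abs_nonneg (a' j)]
  choose φ hφ hφb using fun r : ℕ =>
    hb.exists_aut (β := Equiv.addRight (r * (2 * L))) fun _ _ h => by simpa using h
  -- an `m`-set has room for `n = m / K` blocks of `q` points and for `n` translates of `C`
  refine expGrowth_of_injective (K := C.card + q + 1) (by omega) fun m hm => ?_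
  set n := m / (C.card + q + 1)
  set Z : Finset Γ.D := Finset.univ.biUnion fun r : Fin n => C.image (φ r)
  have hφC : ∀ r : Fin n, φ r '' C ⊆ Z := fun r => by
    rw [← Finset.coe_image]
    exact Finset.coe_subset.mpr
      (Finset.subset_biUnion_of_mem (fun r : Fin n => C.image (φ r)) (Finset.mem_univ r))
  have hZU : Disjoint (Z : Set Γ.D) U := by
    rw [disjoint_left]
    intro x hx
    simp only [Z, Finset.coe_biUnion, Finset.coe_univ, mem_iUnion, Finset.coe_image] at hx
    obtain ⟨r, -, y, hy, rfl⟩ := hx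
    rw [hU.apply_mem_iff (hφ r)]
    exact disjoint_left.mp hCU hy
  have hZm : Z.card + n * q ≤ m := by
    have hZ : Z.card ≤ n * C.card := by
      simpa using Finset.card_biUnion_le_card_mul Finset.univ (fun r : Fin n => C.image (φ r))
        C.card fun r _ => Finset.card_image_le
    have : n * (C.card + q + 1) ≤ m := Nat.div_mul_le_self m _
    nlinarith
  set S : (Fin n → Bool) → Set Γ.D := fun w => ↑Z ∪ range fun i =>
    (b.symm (blockPattern (p := m - (Z.card + n * q)) a a' (2 * L) w i) : Γ.D)
  have hS : ∀ w, (S w).ncard = m := fun w => by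
    rw [ncard_union_range_blockPattern ha ha' hL hZU]
    omega
  refine ⟨fun w => ⟨_, S w, Z.finite_toSet.union (finite_range _), hS w, rfl⟩,
    fun w w' hww' => funext fun r => ?_⟩
  have key : ∀ {w w' : Fin n → Bool} {g : Perm Γ.D}, g ∈ autGroup Γ → g '' S w = S w' →
      w r = false → w' r = true → False := fun hg hgS hr hr' =>
    hnot (exists_aut_extension_of_image_eq hU hb hrat ha ha' hL Z.finite_toSet hZU hg hgS hr hr'
      (hφ r) (hφb r) (hφC r))
  obtain ⟨g, hg, hgS⟩ := exists_aut_image_eq_of_orbit_eq (congrArg Subtype.val hww')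
  cases hr : w r <;> cases hr' : w' r
  · rfl
  · exact (key hg hgS hr hr').elim
  · exact (key (inv_mem hg) (by rw [← hgS, Perm.coe_inv, symm_image_image]) hr' hr).elim
  · rfl

theorem exists_aut_eqOn_and_fix_of_not_expGrowth (hsub : ¬ ExpGrowth Γ) (hU : IsOrbit Γ U)
    (hb : IsOrderConstituent Γ U b)
    (hrat : ∀ x, ∃ V, IsOrbit Γ V ∧ x ∈ V ∧ ∃ c, IsOrderConstituent Γ V c)
    {e : Perm Γ.D} (he : e ∈ autGroup Γ) (F : Finset Γ.D) :
    ∃ g ∈ autGroup Γ, (∀ x ∈ F, x ∈ U → g x = e x) ∧ ∀ x ∈ F, x ∉ U → g x = x := by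
  classical
  obtain ⟨ρ, hρ, hρe⟩ := hb.exists_strictMono hU he
  set T : Finset ℚ := F.preimage (fun t => (b.symm t : Γ.D)) (injective_val_symm b).injOn
  set a := T.orderEmbOfFin rfl
  by_contra hne
  refine hsub (expGrowth_of_not_exists_aut_extension hU hb hrat a.strictMono (hρ.comp a.strictMono)
    (F.filter (· ∉ U)) (disjoint_left.mpr fun x hx => (Finset.mem_filter.mp hx).2) ?_)
  rintro ⟨g, hg, hga, hgC⟩
  refine hne ⟨g, hg, fun x hx hxU => ?_, fun x hx hxU => hgC x (Finset.mem_filter.mpr ⟨hx, hxU⟩)⟩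
  obtain ⟨j, hj⟩ : b ⟨x, hxU⟩ ∈ range a := by
      rw [Finset.range_orderEmbOfFin]
      simpa [T] using hx
  have hx' : x = b.symm (a j) := by simp [hj]
  rw [hx', hga, hρe]
  rfl

end Growth

theorem exists_aut_eqOn_of_forall_orbit {ι : Type*} {U : ι → Set Γ.D} (hU : ∀ i, IsOrbit Γ (U i))
    (hsep : ∀ i, ∀ e ∈ autGroup Γ, ∀ F : Finset Γ.D,
      ∃ g ∈ autGroup Γ, (∀ x ∈ F, x ∈ U i → g x = e x) ∧ ∀ x ∈ F, x ∉ U i → g x = x)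
    {α : Perm Γ.D} (hα : ∀ i, ∃ e ∈ autGroup Γ, ∀ x ∈ U i, α x = e x) (F : Finset Γ.D)
    (I : Finset ι) : ∃ g ∈ autGroup Γ, ∀ x ∈ F, (∃ i ∈ I, x ∈ U i) → g x = α x := by
  classical
  induction I using Finset.induction_on with
  | empty => exact ⟨1, one_mem _, by simp⟩
  | insert i I _ ih =>
    obtain ⟨g, hg, hgα⟩ := ih
    obtain ⟨e, he, heα⟩ := hα i
    obtain ⟨h, hh, hhe, hhfix⟩ := hsep i (e * g⁻¹) (mul_mem he (inv_mem hg)) (F.image g)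
    refine ⟨h * g, mul_mem hh hg, fun x hx hxI => ?_⟩
    have hgx := Finset.mem_image_of_mem g hx
    rw [Perm.mul_apply]
    by_cases hxU : x ∈ U i
    · rw [hhe _ hgx ((hU i).apply_mem_iff hg |>.mpr hxU)]
      simp [heα x hxU]
    · rw [hhfix _ hgx (mt ((hU i).apply_mem_iff hg).mp hxU)]
      obtain ⟨j, hj, hxj⟩ := hxI
      exact hgα x hx ⟨j, (Finset.mem_insert.mp hj).resolve_left (by rintro rfl; exact hxU hxj), hxj⟩

theorem stmt7_general {σ : Signature}
    (Γ : RelStruct σ) (hsub : ¬ ExpGrowth Γ)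
    (k : ℕ) (U : Fin k → Set Γ.D)
    (horb : ∀ i, IsOrbit Γ (U i))
    (hcover : ∀ x : Γ.D, ∃ i, x ∈ U i)
    (hQ : ∀ i, ∃ b : ↥(U i) ≃ ℚ, ∀ g : ↥(U i) ≃ ↥(U i),
      ((∃ e : Γ.D ≃ Γ.D, IsAuto Γ e ∧ ∀ x : ↥(U i), (g x : Γ.D) = e (x : Γ.D)) ↔
        ∃ β : ℚ ≃ ℚ, StrictMono ⇑β ∧ ∀ x : ↥(U i), g x = b.symm (β (b x)))) :
    ∀ α : Γ.D ≃ Γ.D,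
      (IsAuto Γ α ↔
        ∀ i, ∃ e : Γ.D ≃ Γ.D, IsAuto Γ e ∧ ∀ x ∈ U i, α x = e x) := by
  intro α
  refine ⟨fun hα _ => ⟨α, hα, fun _ _ => rfl⟩, fun hα => isAuto_of_forall_finset_exists fun F => ?_⟩
  have hrat : ∀ x, ∃ V, IsOrbit Γ V ∧ x ∈ V ∧ ∃ c, IsOrderConstituent Γ V c := fun x =>
    let ⟨i, hi⟩ := hcover x
    ⟨U i, horb i, hi, hQ i⟩
  have hsep := fun i => let ⟨_, hb⟩ := hQ i
    fun e (he : e ∈ autGroup Γ) F =>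
      exists_aut_eqOn_and_fix_of_not_expGrowth hsub (horb i) hb hrat he F
  obtain ⟨g, hg, hgα⟩ := exists_aut_eqOn_of_forall_orbit horb hsep hα F Finset.univ
  exact ⟨g, hg, fun x hx => let ⟨i, hi⟩ := hcover x; hgα x hx ⟨i, Finset.mem_univ i, hi⟩⟩

/-- Let `Γ` be a countable sub-exponential structure whose orbits on the domain are
`U 0, …, U (k-1)` (pairwise distinct and covering the domain), and suppose each
transitive constituent `G_i = {α|_{U i} : α ∈ Aut(Γ)}` is, via a bijection
`b : U i ≃ ℚ`, exactly the conjugate of the group `Aut(ℚ; <)` of order-preserving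
permutations of `ℚ`. Then a permutation `α` of the domain is an automorphism of `Γ`
if and only if for each `i` its restriction to `U i` belongs to `G_i`, i.e. agrees on
`U i` with some automorphism of `Γ`. -/
theorem stmt7 {σ : Signature} (har : ∀ s : σ.symbols, 0 < σ.arity s)
    (Γ : RelStruct σ) [Countable Γ.D] (hsub : ¬ ExpGrowth Γ)
    (k : ℕ) (U : Fin k → Set Γ.D)
    (horb : ∀ i, IsOrbit Γ (U i))
    (hcover : ∀ x : Γ.D, ∃ i, x ∈ U i)
    (hinj : Function.Injective U)
    (hQ : ∀ i, ∃ b : ↥(U i) ≃ ℚ, ∀ g : ↥(U i) ≃ ↥(U i),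
      ((∃ e : Γ.D ≃ Γ.D, IsAuto Γ e ∧ ∀ x : ↥(U i), (g x : Γ.D) = e (x : Γ.D)) ↔
        ∃ β : ℚ ≃ ℚ, StrictMono ⇑β ∧ ∀ x : ↥(U i), g x = b.symm (β (b x)))) :
    ∀ α : Γ.D ≃ Γ.D,
      (IsAuto Γ α ↔
        ∀ i, ∃ e : Γ.D ≃ Γ.D, IsAuto Γ e ∧ ∀ x ∈ U i, α x = e x) :=
  stmt7_general Γ hsub k U horb hcover hQ
end

section
/- Let G be a group of permutations of a set D that has finitely many orbitals (orbits of the componentwise action of G on D × D). Suppose that for every n ≥ 1 there is a totally symmetric n-ary function f_n : D^n → D that preserves every orbital of G. Let E be a G-invariant equivalence relation on D and let X be an equivalence class of E. If α ∈ G satisfies α^m(X) = X for some integer m > 0, then α(X) = X. -/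
/-- The orbital of the pair `(a, b)` under the permutation group `G`: the orbit of the
componentwise action of `G` on ordered pairs. -/
def orbital {D : Type} (G : Subgroup (Equiv.Perm D)) (a b : D) : Set (D × D) :=
  {p | ∃ g ∈ G, g a = p.1 ∧ g b = p.2}

/-- The `n`-ary operation `f` preserves the binary relation `O ⊆ D × D`. -/
def PreservesPairs {D : Type} {n : ℕ} (f : (Fin n → D) → D) (O : Set (D × D)) : Prop :=
  ∀ a b : Fin n → D, (∀ i, (a i, b i) ∈ O) → (f a, f b) ∈ O

/-!
Write `s t = α^t a`. Since `α^m` fixes the class `X` of `a`, all `s (r m)` lie in `X`, and by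
pigeonhole on the finitely many orbitals there are `u < v`, both multiples of `m`, with
`(a, s (u+1))` and `(a, s (v+1))` in the same orbital `O`. Apply a totally symmetric
polymorphism of arity `n = v - u` to the tuples `x = (s 0, …, s (n-1))` and
`z = (s v, …, s (v+n-1))`: coordinatewise, `x` is related to `z` by the orbital of
`(a, s v)` and to the cyclic rotation of `z` by `O`. Both tuples `z` and its rotation have
the same set of entries, so `(f x, f z)` lies in both orbitals, which therefore coincide.
As `s v ∈ X`, that orbital is contained in `E`, so `s (u+1) ∈ X`; together with
`s (u+1) = α (s u) ∈ α(X)` this gives `α a ∈ X`, hence `α(X) = X`.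
-/

section Orbital

variable {D : Type} {G : Subgroup (Equiv.Perm D)}

theorem mem_orbital_self (a b : D) : (a, b) ∈ orbital G a b :=
  ⟨1, G.one_mem, rfl, rfl⟩

theorem apply_mem_orbital {g : Equiv.Perm D} (hg : g ∈ G) {a b : D} {p : D × D}
    (hp : p ∈ orbital G a b) : (g p.1, g p.2) ∈ orbital G a b := by
  obtain ⟨h, hh, h1, h2⟩ := hp
  exact ⟨g * h, G.mul_mem hg hh, by simp [h1], by simp [h2]⟩

theorem orbital_subset_of_mem {a b c d : D} (h : (c, d) ∈ orbital G a b) :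
    orbital G c d ⊆ orbital G a b := by
  obtain ⟨g, hg, rfl, rfl⟩ := h
  rintro ⟨p₁, p₂⟩ ⟨k, hk, rfl, rfl⟩
  exact ⟨k * g, G.mul_mem hk hg, rfl, rfl⟩

theorem mem_orbital_symm {a b c d : D} (h : (c, d) ∈ orbital G a b) :
    (a, b) ∈ orbital G c d := by
  obtain ⟨g, hg, rfl, rfl⟩ := h
  simpa using apply_mem_orbital (G.inv_mem hg) (mem_orbital_self (G := G) (g a) (g b))

theorem orbital_eq_of_mem {a b c d : D} (h : (c, d) ∈ orbital G a b) :
    orbital G c d = orbital G a b :=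
  (orbital_subset_of_mem h).antisymm (orbital_subset_of_mem (mem_orbital_symm h))

theorem pow_apply_mem_orbital {α : Equiv.Perm D} (hα : α ∈ G) (a : D) (i j : ℕ) :
    ((α ^ i) a, (α ^ (i + j)) a) ∈ orbital G a ((α ^ j) a) := by
  simpa [pow_add] using apply_mem_orbital (pow_mem hα i) (mem_orbital_self (G := G) a ((α ^ j) a))

theorem rel_of_mem_orbital {E : D → D → Prop} (hinv : ∀ g ∈ G, ∀ x y : D, E x y → E (g x) (g y))
    {a b : D} (hab : E a b) {p : D × D} (hp : p ∈ orbital G a b) : E p.1 p.2 := by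
  obtain ⟨g, hg, h₁, h₂⟩ := hp
  rw [← h₁, ← h₂]
  exact hinv g hg a b hab

theorem exists_lt_orbital_eq
    (horbs : ∃ F : Set (D × D), F.Finite ∧ ∀ p : D × D, ∃ q ∈ F, p ∈ orbital G q.1 q.2)
    (a : D) (b : ℕ → D) : ∃ i j, i < j ∧ orbital G a (b i) = orbital G a (b j) := by
  obtain ⟨F, hF, hcover⟩ := horbs
  refine (hF.image fun q => orbital G q.1 q.2).exists_lt_map_eq_of_forall_mem fun i => ?_
  obtain ⟨q, hq, hmem⟩ := hcover (a, b i)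
  exact ⟨q, hq, (orbital_eq_of_mem hmem).symm⟩

end Orbital

section Polymorphism

variable {D : Type} {G : Subgroup (Equiv.Perm D)}

theorem TotallySymmetric.apply_comp_perm {n : ℕ} {f : (Fin n → D) → D}
    (hf : TotallySymmetric f) (x : Fin n → D) (σ : Equiv.Perm (Fin n)) : f (x ∘ σ) = f x :=
  hf _ _ (EquivLike.range_comp x σ)

theorem orbital_eq_of_totallySymmetric {n : ℕ} {f : (Fin n → D) → D}
    (hf : TotallySymmetric f) (hpres : ∀ a b : D, PreservesPairs f (orbital G a b))
    {x z : Fin n → D} (σ : Equiv.Perm (Fin n)) {a b c d : D}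
    (hσ : ∀ i, (x i, z (σ i)) ∈ orbital G a b) (hid : ∀ i, (x i, z i) ∈ orbital G c d) :
    orbital G a b = orbital G c d := by
  have hab : (f x, f z) ∈ orbital G a b := by
    simpa only [hf.apply_comp_perm] using hpres a b x (z ∘ σ) hσ
  exact (orbital_eq_of_mem hab).symm.trans (orbital_eq_of_mem (hpres c d x z hid))

theorem orbital_pow_succ_eq_orbital_pow
    (hts : ∀ n : ℕ, 1 ≤ n → ∃ f : (Fin n → D) → D, TotallySymmetric f ∧
      ∀ a b : D, PreservesPairs f (orbital G a b))
    {α : Equiv.Perm D} (hα : α ∈ G) (a : D) {u v : ℕ} (huv : u < v)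
    (h : orbital G a ((α ^ (u + 1)) a) = orbital G a ((α ^ (v + 1)) a)) :
    orbital G a ((α ^ (u + 1)) a) = orbital G a ((α ^ v) a) := by
  obtain ⟨n, rfl⟩ := Nat.exists_eq_add_of_lt huv
  obtain ⟨f, hf, hpres⟩ := hts (n + 1) (by omega)
  refine orbital_eq_of_totallySymmetric hf hpres (x := fun i => (α ^ (i : ℕ)) a)
    (z := fun i => (α ^ (u + n + 1 + i)) a) (finRotate (n + 1)) (fun i => ?_) (fun i => ?_)
  -- The rotated tuple has entries `α^(v+i+1) a`, except the last one, which wraps to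
  -- `α^v a = α^n (α^(u+1) a)`.
  · by_cases hi : i = Fin.last n
    · subst hi
      have := pow_apply_mem_orbital (G := G) hα a n (u + 1)
      simpa [finRotate_last, show n + (u + 1) = u + n + 1 by omega] using this
    · rw [h]
      convert pow_apply_mem_orbital (G := G) hα a i (u + n + 1 + 1) using 4
      rw [coe_finRotate_of_ne_last hi]
      omega
  · simpa [add_comm] using pow_apply_mem_orbital (G := G) hα a i (u + n + 1)

end Polymorphism

theorem pow_apply_mem_of_image_eq {D : Type} {σ : Equiv.Perm D} {X : Set D} (hX : σ '' X = X)
    {a : D} (ha : a ∈ X) (r : ℕ) : (σ ^ r) a ∈ X := by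
  have := ((Set.mapsTo_image σ X).mono_right hX.subset).iterate r ha
  rwa [Equiv.Perm.iterate_eq_pow] at this

theorem image_setOf_eq_of_rel_apply {D : Type} {G : Subgroup (Equiv.Perm D)}
    {E : D → D → Prop} (hE : Equivalence E) (hinv : ∀ g ∈ G, ∀ x y : D, E x y → E (g x) (g y))
    {α : Equiv.Perm D} (hα : α ∈ G) {a : D} (ha : E a (α a)) :
    α '' {y | E a y} = {y | E a y} := by
  have ha_inv : E a (α⁻¹ a) := by
    simpa using hE.symm (hinv α⁻¹ (G.inv_mem hα) a (α a) ha)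
  ext z
  constructor
  · rintro ⟨y, hy, rfl⟩
    exact hE.trans ha (hinv α hα a y hy)
  · intro hz
    exact ⟨α⁻¹ z, hE.trans ha_inv (hinv α⁻¹ (G.inv_mem hα) a z hz), by simp⟩

/-- Let `G` be a permutation group with finitely many orbitals, such that for every
`n ≥ 1` there is a totally symmetric `n`-ary operation preserving every orbital of `G`.
If `E` is a `G`-invariant equivalence relation, `X` the `E`-class of `a`, and `α ∈ G`
satisfies `α^m(X) = X` for some `m > 0`, then `α(X) = X`. -/
theorem stmt9 {D : Type} (G : Subgroup (Equiv.Perm D))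
    (horbs : ∃ F : Set (D × D), F.Finite ∧
      ∀ p : D × D, ∃ q ∈ F, p ∈ orbital G q.1 q.2)
    (hts : ∀ n : ℕ, 1 ≤ n → ∃ f : (Fin n → D) → D, TotallySymmetric f ∧
      ∀ a b : D, PreservesPairs f (orbital G a b))
    (E : D → D → Prop) (hE : Equivalence E)
    (hinv : ∀ g ∈ G, ∀ x y : D, E x y → E (g x) (g y))
    (a : D) (α : Equiv.Perm D) (hα : α ∈ G) (m : ℕ) (hm : 0 < m)
    (hfix : (α ^ m) '' {y | E a y} = {y | E a y}) :
    α '' {y | E a y} = {y | E a y} := by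
  have hperiod (r : ℕ) : E a ((α ^ (m * r)) a) := by
    simpa [pow_mul] using pow_apply_mem_of_image_eq hfix (hE.refl a) r
  obtain ⟨i, j, hij, horb⟩ := exists_lt_orbital_eq horbs a fun r => (α ^ (m * r + 1)) a
  have hO := orbital_pow_succ_eq_orbital_pow hts hα a
    (Nat.mul_lt_mul_of_pos_left hij hm) horb
  have hsucc : E a ((α ^ (m * i + 1)) a) :=
    rel_of_mem_orbital hinv (hperiod j) (hO ▸ mem_orbital_self a _)
  have hshift : E (α a) ((α ^ (m * i + 1)) a) := by
    simpa [pow_succ'] using hinv α hα a _ (hperiod i)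
  exact image_setOf_eq_of_rel_apply hE hinv hα (hE.trans hsucc (hE.symm hshift))
end
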